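/- Consider an improving k-swap of type-1 from σ to σ'. Then |γ_s(σ')| ≤ |γ_s(σ)|, and for every ℓ with 1 ≤ ℓ ≤ |γ_s(σ')|, the ℓ-th smallest value of the multiset { L_i(σ') : i ∈ γ_s(σ') } is greater than or equal to the ℓ-th smallest value of the multiset { L_i(σ) : i ∈ γ_s(σ) }. -/

import Mathlib

open Finset

/-- The load of machine `i` under schedule `σ` with processing times `p`. -/
noncomputable def load {n m : ℕ} (p : Fin n → ℝ) (σ : Fin n → Fin m) (i : Fin m) : ℝ :=
  ∑ j ∈ Finset.univ.filter (fun j => σ j = i), p j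

/-- The makespan (maximum machine load) of schedule `σ`. -/
noncomputable def Lmax {n m : ℕ} (p : Fin n → ℝ) (σ : Fin n → Fin m) : ℝ :=
  ⨆ i, load p σ i

/-- `δ_min`: the minimum of `|p(A) - p(B)|` over disjoint finsets of jobs `A`, `B`
with `1 ≤ |A| + |B| ≤ k`. -/
noncomputable def deltaMin (n k : ℕ) (p : Fin n → ℝ) : ℝ :=
  sInf { x | ∃ A B : Finset (Fin n), Disjoint A B ∧ 1 ≤ A.card + B.card ∧
    A.card + B.card ≤ k ∧ x = |∑ j ∈ A, p j - ∑ j ∈ B, p j| }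

/-- An improving `k`-swap from `σ` to `σ'`, with critical machine `i`, machine `i' ≠ i`,
and disjoint job sets `A ⊆ σ⁻¹ {i}`, `B ⊆ σ⁻¹ {i'}` with `|A| ≥ 1`, `|A| + |B| ≤ k` and
`0 < p(A) - p(B) < L_i(σ) - L_{i'}(σ)`; `σ'` sends `A` to `i'`, `B` to `i`, and agrees
with `σ` elsewhere. -/
def IsImprovingKSwap (k : ℕ) {n m : ℕ} (p : Fin n → ℝ) (σ σ' : Fin n → Fin m)
    (i i' : Fin m) (A B : Finset (Fin n)) : Prop :=
  load p σ i = Lmax p σ ∧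
  i' ≠ i ∧
  Disjoint A B ∧
  (∀ j ∈ A, σ j = i) ∧ (∀ j ∈ B, σ j = i') ∧
  1 ≤ A.card ∧ A.card + B.card ≤ k ∧
  0 < (∑ j ∈ A, p j) - ∑ j ∈ B, p j ∧
  (∑ j ∈ A, p j) - (∑ j ∈ B, p j) < load p σ i - load p σ i' ∧
  (∀ j ∈ A, σ' j = i') ∧ (∀ j ∈ B, σ' j = i) ∧
  ∀ j, j ∉ A → j ∉ B → σ' j = σ j

/-- The set `γ_s(σ)` of machines whose load is at most `L_max(σ) - δ_min`. -/
noncomputable def gammaS (k : ℕ) {n m : ℕ} (p : Fin n → ℝ) (σ : Fin n → Fin m) :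
    Finset (Fin m) :=
  Finset.univ.filter (fun i => load p σ i ≤ Lmax p σ - deltaMin n k p)

/-- The potential `Φ(σ) = ∑_{(i,i')} |L_i(σ) - L_{i'}(σ)|` over ordered pairs of machines. -/
noncomputable def potential {n m : ℕ} (p : Fin n → ℝ) (σ : Fin n → Fin m) : ℝ :=
  ∑ i : Fin m, ∑ i' : Fin m, |load p σ i - load p σ i'|


/-- The multiset of loads of the machines in `γ_s(σ)`, sorted in nondecreasing order. -/
noncomputable def sortedGammaSLoads (k : ℕ) {n m : ℕ} (p : Fin n → ℝ)
    (σ : Fin n → Fin m) : List ℝ :=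
  Multiset.sort ((gammaS k p σ).val.map (load p σ)) (· ≤ ·)

/-!
A type-1 swap has `i' ∉ γ_s(σ')`, so the transposition `(i i')` maps `γ_s(σ')` injectively into
`γ_s(σ)` without increasing loads: the critical machine `i` goes to `i'`, whose old load
`L_{i'}(σ) < L_i(σ) - (p(A) - p(B)) = L_i(σ')`, and every other machine keeps its load while the
makespan does not grow. Such a load-decreasing injection dominates order statistics, because for
every threshold `x` it sends members of load at most `x` to members of load at most `x`.
-/

section OrderStatistics

variable {α : Type*} [LinearOrder α]

theorem List.Pairwise.getElem_le_iff_lt_countP {l : List α} (hl : l.Pairwise (· ≤ ·))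
    {ℓ : ℕ} (hℓ : ℓ < l.length) (x : α) : l[ℓ] ≤ x ↔ ℓ < l.countP (· ≤ x) := by
  induction l generalizing ℓ with
  | nil => simp at hℓ
  | cons a t ih =>
    rw [List.pairwise_cons] at hl
    by_cases hax : a ≤ x
    · cases ℓ with
      | zero => simp [hax]
      | succ ℓ => simpa [List.countP_cons, hax] using ih hl.2 (Nat.lt_of_succ_lt_succ hℓ)
    · have hlt : ∀ b ∈ a :: t, x < b := by
        rintro b (_ | ⟨_, hb⟩)
        exacts [not_le.1 hax, (not_le.1 hax).trans_le (hl.1 b hb)]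
      have hcount : (a :: t).countP (· ≤ x) = 0 :=
        List.countP_eq_zero.2 fun b hb => by simpa using hlt b hb
      simpa [hcount] using hlt _ (List.getElem_mem hℓ)

theorem Multiset.sort_getD_le_of_countP_le {s t : Multiset α}
    (hst : ∀ x, s.countP (· ≤ x) ≤ t.countP (· ≤ x)) {ℓ : ℕ} (hℓ : ℓ < Multiset.card s)
    (d : α) : (t.sort (· ≤ ·)).getD ℓ d ≤ (s.sort (· ≤ ·)).getD ℓ d := by
  have hcount (u : Multiset α) (x : α) :
      (u.sort (· ≤ ·)).countP (· ≤ x) = u.countP (· ≤ x) := by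
    conv_rhs => rw [← Multiset.sort_eq u (· ≤ ·)]
    exact (Multiset.coe_countP _ _).symm
  have hs : ℓ < (s.sort (· ≤ ·)).length := by rwa [Multiset.length_sort]
  set x := (s.sort (· ≤ ·))[ℓ]
  have hsx : ℓ < t.countP (· ≤ x) := by
    refine lt_of_lt_of_le ?_ (hst x)
    rw [← hcount, ← (Multiset.pairwise_sort s _).getElem_le_iff_lt_countP hs]
  have ht : ℓ < (t.sort (· ≤ ·)).length := by
    rw [Multiset.length_sort]; exact hsx.trans_le (Multiset.countP_le_card _ _)
  rw [List.getD_eq_getElem _ _ hs, List.getD_eq_getElem _ _ ht,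
    (Multiset.pairwise_sort t _).getElem_le_iff_lt_countP ht, hcount]
  exact hsx

theorem Finset.sort_map_getD_le_of_injOn {ι κ : Type*} {s : Finset ι} {t : Finset κ}
    {f : ι → κ} {g : ι → α} {g' : κ → α} (hf : Set.MapsTo f s t) (hinj : Set.InjOn f s)
    (hg : ∀ a ∈ s, g' (f a) ≤ g a) {ℓ : ℕ} (hℓ : ℓ < s.card) (d : α) :
    ((t.val.map g').sort (· ≤ ·)).getD ℓ d ≤ ((s.val.map g).sort (· ≤ ·)).getD ℓ d := by
  refine Multiset.sort_getD_le_of_countP_le (fun x => ?_) (by simpa using hℓ) d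
  simp only [Multiset.countP_map, ← Finset.filter_val, Finset.card_val]
  refine Finset.card_le_card_of_injOn f (fun a ha => ?_)
    (hinj.mono (Finset.coe_subset.2 (Finset.filter_subset _ _)))
  simp only [Finset.mem_coe, Finset.mem_filter] at ha ⊢
  exact ⟨hf ha.1, (hg a ha.1).trans ha.2⟩

end OrderStatistics

theorem load_le_Lmax {n m : ℕ} (p : Fin n → ℝ) (σ : Fin n → Fin m) (h : Fin m) :
    load p σ h ≤ Lmax p σ :=
  le_ciSup (Set.finite_range _).bddAbove h

theorem load_sub_load_eq_sum {n m : ℕ} (p : Fin n → ℝ) {σ σ' : Fin n → Fin m}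
    {S : Finset (Fin n)} (hS : ∀ j ∉ S, σ' j = σ j) (h : Fin m) :
    load p σ' h - load p σ h =
      ∑ j ∈ S, ((if σ' j = h then p j else 0) - if σ j = h then p j else 0) := by
  simp only [load, Finset.sum_filter, ← Finset.sum_sub_distrib]
  exact (Finset.sum_subset (Finset.subset_univ S) fun j _ hj => by simp [hS j hj]).symm

namespace IsImprovingKSwap

variable {n m k : ℕ} {p : Fin n → ℝ} {σ σ' : Fin n → Fin m} {i i' : Fin m}
  {A B : Finset (Fin n)}

theorem load_eq (hswap : IsImprovingKSwap k p σ σ' i i' A B) (h : Fin m) :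
    load p σ' h = load p σ h +
      ((if i' = h then 1 else 0) - if i = h then 1 else 0) * (∑ j ∈ A, p j - ∑ j ∈ B, p j) := by
  obtain ⟨-, -, hAB, hAσ, hBσ, -, -, -, -, hAσ', hBσ', hout⟩ := hswap
  have hS : ∀ j ∉ A ∪ B, σ' j = σ j := fun j hj =>
    hout j (fun hA => hj (Finset.mem_union_left _ hA)) fun hB => hj (Finset.mem_union_right _ hB)
  have hA : ∑ j ∈ A, ((if σ' j = h then p j else 0) - if σ j = h then p j else 0) =
      ∑ j ∈ A, ((if i' = h then p j else 0) - if i = h then p j else 0) :=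
    Finset.sum_congr rfl fun j hj => by rw [hAσ j hj, hAσ' j hj]
  have hB : ∑ j ∈ B, ((if σ' j = h then p j else 0) - if σ j = h then p j else 0) =
      ∑ j ∈ B, ((if i = h then p j else 0) - if i' = h then p j else 0) :=
    Finset.sum_congr rfl fun j hj => by rw [hBσ j hj, hBσ' j hj]
  rw [← sub_eq_iff_eq_add', load_sub_load_eq_sum p hS, Finset.sum_union hAB, hA, hB]
  split_ifs <;> simp <;> ring

theorem load_critical (hswap : IsImprovingKSwap k p σ σ' i i' A B) :
    load p σ' i = load p σ i - (∑ j ∈ A, p j - ∑ j ∈ B, p j) := by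
  simpa [hswap.2.1, sub_eq_add_neg] using hswap.load_eq i

theorem load_partner (hswap : IsImprovingKSwap k p σ σ' i i' A B) :
    load p σ' i' = load p σ i' + (∑ j ∈ A, p j - ∑ j ∈ B, p j) := by
  simpa [hswap.2.1.symm] using hswap.load_eq i'

theorem load_of_ne (hswap : IsImprovingKSwap k p σ σ' i i' A B) {h : Fin m} (hi : h ≠ i)
    (hi' : h ≠ i') : load p σ' h = load p σ h := by
  simpa [hi.symm, hi'.symm] using hswap.load_eq h

theorem Lmax_le (hswap : IsImprovingKSwap k p σ σ' i i' A B) : Lmax p σ' ≤ Lmax p σ := by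
  have : Nonempty (Fin m) := ⟨i⟩
  have hload_i := hswap.load_critical
  have hload_i' := hswap.load_partner
  have hload_other : ∀ h, h ≠ i → h ≠ i' → load p σ' h = load p σ h :=
    fun _ => hswap.load_of_ne
  obtain ⟨hcrit, -, -, -, -, -, -, hpos, hlt, -⟩ := hswap
  refine ciSup_le fun h => ?_
  by_cases hi : h = i
  · subst hi
    linarith
  by_cases hi' : h = i'
  · subst hi'
    linarith
  · exact (hload_other h hi hi').trans_le (load_le_Lmax p σ h)

theorem load_swap_le (hswap : IsImprovingKSwap k p σ σ' i i' A B) {h : Fin m} (hi' : h ≠ i') :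
    load p σ (Equiv.swap i i' h) ≤ load p σ' h := by
  rcases eq_or_ne h i with rfl | hi
  · have hload_i := hswap.load_critical
    obtain ⟨-, -, -, -, -, -, -, -, hlt, -⟩ := hswap
    rw [Equiv.swap_apply_left, hload_i]
    linarith
  · rw [Equiv.swap_apply_of_ne_of_ne hi hi', hswap.load_of_ne hi hi']

theorem swap_mem_gammaS (hswap : IsImprovingKSwap k p σ σ' i i' A B) {h : Fin m}
    (hh : h ∈ gammaS k p σ') (hi' : h ≠ i') : Equiv.swap i i' h ∈ gammaS k p σ := by
  simp only [gammaS, Finset.mem_filter, Finset.mem_univ, true_and] at hh ⊢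
  linarith [hswap.load_swap_le hi', hswap.Lmax_le]

end IsImprovingKSwap

theorem gammaS_loads_pointwise_nondecreasing_general {n m k : ℕ} (p : Fin n → ℝ)
    (σ σ' : Fin n → Fin m) (i i' : Fin m) (A B : Finset (Fin n))
    (hswap : IsImprovingKSwap k p σ σ' i i' A B)
    (htype1 : i' ∉ gammaS k p σ') :
    (gammaS k p σ').card ≤ (gammaS k p σ).card ∧
    ∀ ℓ : ℕ, ℓ < (gammaS k p σ').card →
      (sortedGammaSLoads k p σ).getD ℓ 0 ≤ (sortedGammaSLoads k p σ').getD ℓ 0 := by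
  have hne : ∀ h ∈ gammaS k p σ', h ≠ i' := fun h hh e => htype1 (e ▸ hh)
  have hmaps : Set.MapsTo (Equiv.swap i i') (gammaS k p σ') (gammaS k p σ) :=
    fun h hh => hswap.swap_mem_gammaS hh (hne h hh)
  have hinj : Set.InjOn (Equiv.swap i i') (gammaS k p σ') := (Equiv.injective _).injOn
  exact ⟨Finset.card_le_card_of_injOn _ hmaps hinj, fun ℓ hℓ =>
    Finset.sort_map_getD_le_of_injOn hmaps hinj (fun h hh => hswap.load_swap_le (hne h hh)) hℓ 0⟩

/-- For an improving `k`-swap of type-1 (i.e. `i' ∈ γ_l(σ')`) from `σ` to `σ'`: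
`|γ_s(σ')| ≤ |γ_s(σ)|`, and for every position `ℓ` (here `0`-indexed) below `|γ_s(σ')|`,
the `ℓ`-th smallest load of a machine in `γ_s(σ')` under `σ'` is at least the `ℓ`-th
smallest load of a machine in `γ_s(σ)` under `σ`. -/
theorem gammaS_loads_pointwise_nondecreasing {n m k : ℕ} (hm : 2 ≤ m) (hk : 1 ≤ k)
    (p : Fin n → ℝ) (hp : ∀ j, 0 < p j) (hδ : 0 < deltaMin n k p)
    (σ σ' : Fin n → Fin m) (i i' : Fin m) (A B : Finset (Fin n))
    (hswap : IsImprovingKSwap k p σ σ' i i' A B)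
    (htype1 : i' ∉ gammaS k p σ') :
    (gammaS k p σ').card ≤ (gammaS k p σ).card ∧
    ∀ ℓ : ℕ, ℓ < (gammaS k p σ').card →
      (sortedGammaSLoads k p σ).getD ℓ 0 ≤ (sortedGammaSLoads k p σ').getD ℓ 0 :=
  gammaS_loads_pointwise_nondecreasing_general p σ σ' i i' A B hswap htype1
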